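/- (Fiber at a nonsingular double point, char 2: additive group.) Suppose char k = 2, n ≥ 1, a ∈ k with a ≠ 0, and b = (b₁,…,bₙ) ∈ kⁿ with b ≠ 0. For a commutative k-algebra R set G(R) := {(ξ,η) ∈ Rⁿ × R : η + a·η² + Σᵢ bᵢξᵢ = 0 and 1 + 2aη ∈ R^×}, with operation (ξ̃,η̃)∘(ξ,η) := (ξ + (1+2aη)²·ξ̃, η + η̃ + 2a·η·η̃). Then for every R the condition 1 + 2aη ∈ R^× is automatic, the operation is simply ((ξ,η),(ξ̃,η̃)) ↦ (ξ + ξ̃, η + η̃), G(R) is a group, and G(R) is isomorphic to the additive group Rⁿ, naturally in R. -/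
import Mathlib


noncomputable section

universe u v

variable {k : Type v} [Field k] {n : ℕ}

/-- The group `G(R)` at a nonsingular double point:
`{(ξ,η) : η + aη² + Σ bᵢξᵢ = 0, 1 + 2aη ∈ R^×}`. -/
def doubleFiber (a : k) (b : Fin n → k) (R : Type*) [CommRing R] [Algebra k R] :
    Set ((Fin n → R) × R) :=
  {p | p.2 + algebraMap k R a * p.2 ^ 2 + ∑ i, algebraMap k R (b i) * p.1 i = 0 ∧
    IsUnit (1 + 2 * algebraMap k R a * p.2)}

/-- The operation `(ξ̃,η̃)∘(ξ,η) = (ξ + (1+2aη)²·ξ̃, η + η̃ + 2a·η·η̃)`. -/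
def doubleFiberOp (a : k) {R : Type*} [CommRing R] [Algebra k R]
    (p q : (Fin n → R) × R) : (Fin n → R) × R :=
  (fun i => q.1 i + (1 + 2 * algebraMap k R a * q.2) ^ 2 * p.1 i,
   q.2 + p.2 + 2 * algebraMap k R a * q.2 * p.2)

lemma dfTwoZero (hchar : (2 : k) = 0) (R : Type*) [CommRing R] [Algebra k R] :
    (2 : R) = 0 := by
  have h : algebraMap k R 2 = (2 : R) := map_ofNat _ 2
  rw [← h, hchar, map_zero]

lemma dfXX (hchar : (2 : k) = 0) {R : Type*} [CommRing R] [Algebra k R] (x : R) :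
    x + x = 0 := by
  rw [← two_mul, dfTwoZero hchar R, zero_mul]

/-- The equivalence `G(R) ≃ Rⁿ` in characteristic 2. -/
def dfEquiv (hchar : (2 : k) = 0) (a : k) (b : Fin n → k) (i₀ : Fin n) (hi₀ : b i₀ ≠ 0)
    (R : Type*) [CommRing R] [Algebra k R] :
    {p : (Fin n → R) × R // p ∈ doubleFiber a b R} ≃ (Fin n → R) where
  toFun p := Function.update p.val.1 i₀ p.val.2
  invFun v := ⟨(Function.update v i₀
      (-(algebraMap k R (b i₀)⁻¹ * (v i₀ + algebraMap k R a * v i₀ ^ 2 +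
        ∑ i ∈ Finset.univ.erase i₀, algebraMap k R (b i) * v i))), v i₀), by
    constructor
    · dsimp only
      rw [← Finset.add_sum_erase _ _ (Finset.mem_univ i₀)]
      rw [Function.update_self]
      have hs : ∑ i ∈ Finset.univ.erase i₀, algebraMap k R (b i) *
          Function.update v i₀ (-(algebraMap k R (b i₀)⁻¹ * (v i₀ +
            algebraMap k R a * v i₀ ^ 2 +
            ∑ i ∈ Finset.univ.erase i₀, algebraMap k R (b i) * v i))) i
          = ∑ i ∈ Finset.univ.erase i₀, algebraMap k R (b i) * v i :=
        Finset.sum_congr rfl fun i hi => by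
          rw [Function.update_of_ne (Finset.ne_of_mem_erase hi)]
      rw [hs]
      have hβ : algebraMap k R (b i₀) * algebraMap k R (b i₀)⁻¹ = 1 := by
        rw [← map_mul, mul_inv_cancel₀ hi₀, map_one]
      linear_combination (-(v i₀ + algebraMap k R a * v i₀ ^ 2 +
        ∑ i ∈ Finset.univ.erase i₀, algebraMap k R (b i) * v i)) * hβ
    · have h2 : (2 : R) = 0 := dfTwoZero hchar R
      rw [h2, zero_mul, zero_mul, add_zero]
      exact isUnit_one⟩
  left_inv := by
    rintro ⟨⟨ξ, η⟩, hmem, -⟩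
    apply Subtype.ext
    have h0 : Function.update ξ i₀ η i₀ = η := Function.update_self _ _ _
    have hs : ∑ i ∈ Finset.univ.erase i₀, algebraMap k R (b i) *
        Function.update ξ i₀ η i
        = ∑ i ∈ Finset.univ.erase i₀, algebraMap k R (b i) * ξ i :=
      Finset.sum_congr rfl fun i hi => by
        rw [Function.update_of_ne (Finset.ne_of_mem_erase hi)]
    have hβ : algebraMap k R (b i₀)⁻¹ * algebraMap k R (b i₀) = 1 := by
      rw [← map_mul, inv_mul_cancel₀ hi₀, map_one]
    rw [← Finset.add_sum_erase _ _ (Finset.mem_univ i₀)] at hmem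
    have hc : -(algebraMap k R (b i₀)⁻¹ * (η +
        algebraMap k R a * η ^ 2 +
        ∑ i ∈ Finset.univ.erase i₀, algebraMap k R (b i) *
          Function.update ξ i₀ η i)) = ξ i₀ := by
      rw [hs]
      linear_combination (-(algebraMap k R (b i₀)⁻¹)) * hmem + (ξ i₀) * hβ
    simp only
    rw [Function.update_idem, h0, hc, Function.update_eq_self]
  right_inv := by
    intro v
    simp only
    rw [Function.update_idem, Function.update_eq_self]

/-- **Fiber at a nonsingular double point, `char k = 2`: additive group.**
In characteristic `2` the condition `1 + 2aη ∈ R^×` is automatic, the operation is simply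
componentwise addition, `G(R)` is a group, and `G(R)` is isomorphic to the additive group
`Rⁿ`, naturally in `R`. -/
theorem double_fiber_char_two_additive (hchar : (2 : k) = 0) (hn : 1 ≤ n)
    (a : k) (ha : a ≠ 0) (b : Fin n → k) (hb : b ≠ 0) :
    -- the unit condition is automatic
    (∀ (R : Type u) [CommRing R] [Algebra k R], ∀ η : R,
      IsUnit (1 + 2 * algebraMap k R a * η)) ∧
    -- the operation is simply addition
    (∀ (R : Type u) [CommRing R] [Algebra k R], ∀ p q : (Fin n → R) × R,
      doubleFiberOp a p q = (fun i => q.1 i + p.1 i, q.2 + p.2)) ∧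
    -- `G(R)` is a group under the operation, with identity `(0,0)`
    (∀ (R : Type u) [CommRing R] [Algebra k R],
      (∀ p q, p ∈ doubleFiber a b R → q ∈ doubleFiber a b R →
        doubleFiberOp a p q ∈ doubleFiber a b R) ∧
      ((0, 0) ∈ doubleFiber a b R) ∧
      (∀ p, p ∈ doubleFiber a b R →
        doubleFiberOp a p (0, 0) = p ∧ doubleFiberOp a (0, 0) p = p) ∧
      (∀ p q s, p ∈ doubleFiber a b R → q ∈ doubleFiber a b R → s ∈ doubleFiber a b R →
        doubleFiberOp a (doubleFiberOp a p q) s = doubleFiberOp a p (doubleFiberOp a q s)) ∧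
      (∀ p, p ∈ doubleFiber a b R → ∃ q, q ∈ doubleFiber a b R ∧
        doubleFiberOp a p q = (0, 0) ∧ doubleFiberOp a q p = (0, 0))) ∧
    -- `G(R)` is isomorphic to the additive group `Rⁿ`, naturally in `R`
    (∃ e : ∀ (R : Type u) [CommRing R] [Algebra k R],
        {p : (Fin n → R) × R // p ∈ doubleFiber a b R} ≃ (Fin n → R),
      (∀ (R : Type u) [CommRing R] [Algebra k R],
        ∀ p q s : {p : (Fin n → R) × R // p ∈ doubleFiber a b R},
          s.val = doubleFiberOp a p.val q.val → e R s = e R p + e R q) ∧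
      (∀ (R R' : Type u) [CommRing R] [Algebra k R] [CommRing R'] [Algebra k R']
          (φ : R →ₐ[k] R')
          (p : {p : (Fin n → R) × R // p ∈ doubleFiber a b R})
          (p' : {p : (Fin n → R') × R' // p ∈ doubleFiber a b R'}),
        p'.val = (fun i => φ (p.val.1 i), φ p.val.2) →
          e R' p' = fun i => φ (e R p i))) := by
  obtain ⟨i₀, hi₀⟩ : ∃ i, b i ≠ 0 := by
    by_contra h
    push_neg at h
    exact hb (funext h)
  have hunit : ∀ (R : Type u) [CommRing R] [Algebra k R], ∀ η : R,
      IsUnit (1 + 2 * algebraMap k R a * η) := by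
    intro R _ _ η
    rw [dfTwoZero hchar R, zero_mul, zero_mul, add_zero]
    exact isUnit_one
  have hop : ∀ (R : Type u) [CommRing R] [Algebra k R], ∀ p q : (Fin n → R) × R,
      doubleFiberOp a p q = (fun i => q.1 i + p.1 i, q.2 + p.2) := by
    intro R _ _ p q
    have h2 : (2 : R) = 0 := dfTwoZero hchar R
    simp [doubleFiberOp, h2]
  refine ⟨hunit, hop, ?_, ?_⟩
  · intro R _ _
    have h2 : (2 : R) = 0 := dfTwoZero hchar R
    refine ⟨?_, ?_, ?_, ?_, ?_⟩
    · rintro p q ⟨hp, -⟩ ⟨hq, -⟩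
      rw [hop]
      refine ⟨?_, hunit R _⟩
      simp only [mul_add, Finset.sum_add_distrib]
      linear_combination hp + hq + (algebraMap k R a * p.2 * q.2) * h2
    · exact ⟨by simp, hunit R 0⟩
    · intro p hp
      constructor <;> · rw [hop]; simp
    · intro p q s _ _ _
      rw [hop, hop, hop, hop]
      refine Prod.ext (funext fun i => ?_) ?_ <;> dsimp <;> ring
    · intro p hp
      refine ⟨p, hp, ?_, ?_⟩ <;>
      · rw [hop]
        exact Prod.ext (funext fun i => dfXX hchar _) (dfXX hchar _)
  · refine ⟨fun R _ _ => dfEquiv hchar a b i₀ hi₀ R, ?_, ?_⟩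
    · intro R _ _ p q s hs
      rw [hop] at hs
      funext i
      simp only [dfEquiv, Equiv.coe_fn_mk, Pi.add_apply, hs]
      by_cases hi : i = i₀
      · subst hi
        simp [Function.update_self, add_comm]
      · simp [Function.update_of_ne hi, add_comm]
    · intro R R' _ _ _ _ φ p p' hp'
      funext i
      simp only [dfEquiv, Equiv.coe_fn_mk, hp']
      by_cases hi : i = i₀
      · subst hi
        simp [Function.update_self]
      · simp [Function.update_of_ne hi]

end
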